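/- arXiv:2603.05790 — 4 statements merged into one kernel-verified Lean document; each statement's English description precedes it below -/
import Mathlib

section
/- Let M be a smooth manifold and ψ: TM → TM a bundle automorphism (i.e., a C^∞(M)-linear automorphism of the module of vector fields). If ψ preserves the Lie bracket of vector fields, i.e., [ψX, ψY] = ψ[X,Y] for all vector fields X, Y, then ψ is the identity map. -/
/-- If a `C^∞(M)`-linear bundle automorphism `ψ` of `TM` preserves the Lie
bracket of vector fields, then `ψ` is the identity.  Here `C` plays the role of `C^∞(M)`,
`V` the `C^∞(M)`-module of vector fields with its Lie bracket, and `D X f` the action of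
the vector field `X` on the function `f`. -/
theorem bracket_preserving_bundle_automorphism_is_id
    {C V : Type*} [CommRing C] [AddCommGroup V] [Module C V] [LieRing V]
    [FaithfulSMul C V]
    (D : V → C → C)
    (hfaithful : ∀ X Y : V, (∀ f : C, D X f = D Y f) → X = Y)
    (hleibniz : ∀ (X Y : V) (f : C), ⁅X, f • Y⁆ = D X f • Y + f • ⁅X, Y⁆)
    (ψ : V ≃ₗ[C] V)
    (hψ : ∀ X Y : V, ⁅ψ X, ψ Y⁆ = ψ ⁅X, Y⁆) :
    ∀ X : V, ψ X = X := by
  intro X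
  apply hfaithful
  intro f
  apply eq_of_smul_eq_smul (α := V)
  intro Z
  set Y := ψ.symm Z with hY
  have hZ : ψ Y = Z := ψ.apply_symm_apply Z
  have h2 := hψ X (f • Y)
  rw [map_smul, hleibniz, hleibniz, map_add, map_smul, map_smul, hψ X Y] at h2
  have := add_right_cancel h2
  rw [hZ] at this
  exact this
end

section
/- Let V be a real inner product space of dimension n ≥ 3 and F: V → V a linear isomorphism such that the induced map F₂ on Λ²V (defined by F₂(v∧w) = Fv ∧ Fw) is self-adjoint with respect to the induced inner product on Λ²V. Then F is either self-adjoint or skew-adjoint. -/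
open scoped RealInnerProductSpace

/-- Let `V` be a real inner product space of dimension `n ≥ 3` and
`F : V → V` a linear isomorphism such that the induced map `F₂` on `Λ²V` is self-adjoint
for the induced inner product `⟨v₁∧v₂, w₁∧w₂⟩ = ⟨v₁,w₁⟩⟨v₂,w₂⟩ − ⟨v₁,w₂⟩⟨v₂,w₁⟩`
(stated on the spanning decomposable elements).  Then `F` is self-adjoint or
skew-adjoint. -/
theorem selfadjoint_on_two_forms_implies_pm_selfadjoint
    {V : Type*} [NormedAddCommGroup V] [InnerProductSpace ℝ V]
    [FiniteDimensional ℝ V] (hdim : 3 ≤ Module.finrank ℝ V)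
    (F : V ≃ₗ[ℝ] V)
    (hF2 : ∀ v w x y : V,
      ⟪F v, x⟫ * ⟪F w, y⟫ - ⟪F v, y⟫ * ⟪F w, x⟫
        = ⟪v, F x⟫ * ⟪w, F y⟫ - ⟪v, F y⟫ * ⟪w, F x⟫) :
    (∀ x y : V, ⟪F x, y⟫ = ⟪x, F y⟫) ∨ (∀ x y : V, ⟪F x, y⟫ = -⟪x, F y⟫) := by
  classical
  set g : V → V → ℝ := fun v y => ⟪F v, y⟫ + ⟪v, F y⟫ with hg
  set h : V → V → ℝ := fun v y => ⟪F v, y⟫ - ⟪v, F y⟫ with hh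
  -- key identity
  have E : ∀ v w x y : V,
      g v x * h w y + h v x * g w y = g v y * h w x + h v y * g w x := by
    intro v w x y
    simp only [hg, hh]
    linear_combination 2 * hF2 v w x y
  have gsymm : ∀ v y : V, g v y = g y v := by
    intro v y
    simp only [hg, real_inner_comm (F v) y, real_inner_comm v (F y)]
    ring
  have hanti : ∀ v y : V, h v y = - h y v := by
    intro v y
    simp only [hh, real_inner_comm (F v) y, real_inner_comm v (F y)]
    ring
  -- E1 : g x x * h v y = g v x * h x y + h v x * g x y
  have E1 : ∀ v x y : V, g x x * h v y = g v x * h x y + h v x * g x y := by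
    intro v x y
    have hE := E v x x y
    have hxx : h x x = 0 := by have := hanti x x; linarith
    linear_combination -hE - g v y * hxx
  by_cases hgzero : ∀ x : V, g x x = 0
  · -- g vanishes, so F is skew-adjoint
    right
    intro x y
    have h1 := hgzero (x + y)
    have h2 := hgzero x
    have h3 := hgzero y
    have hxy : g x y = 0 := by
      have hexp : g (x + y) (x + y) = g x x + g x y + g y x + g y y := by
        simp only [hg, map_add, inner_add_left, inner_add_right]
        ring
      have := gsymm x y
      rw [hexp] at h1
      linarith
    simp only [hg] at hxy
    linarith
  · push_neg at hgzero
    obtain ⟨x₀, hc⟩ := hgzero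
    by_cases hbzero : ∀ y : V, h x₀ y = 0
    · -- h vanishes, so F is self-adjoint
      left
      intro x y
      have key : g x₀ x₀ * h x y = 0 := by
        rw [E1 x x₀ y, hbzero y, hanti x x₀, hbzero x]
        ring
      have : h x y = 0 := by
        rcases mul_eq_zero.mp key with h' | h'
        · exact absurd h' hc
        · exact h'
      simp only [hh] at this
      linarith
    · -- both nonzero: contradiction with dim ≥ 3
      exfalso
      push_neg at hbzero
      obtain ⟨x₁, hd⟩ := hbzero
      set Fadj := LinearMap.adjoint (F : V →ₗ[ℝ] V) with hFadj
      have hadj : ∀ v y : V, ⟪Fadj v, y⟫ = ⟪v, F y⟫ := by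
        intro v y
        simp [hFadj, LinearMap.adjoint_inner_left]
      set a : V := F x₀ + Fadj x₀ with ha
      set b : V := F x₀ - Fadj x₀ with hb
      have hag : ∀ y : V, ⟪a, y⟫ = g x₀ y := by
        intro y; simp [ha, inner_add_left, hadj, hg]
      have hbh : ∀ y : V, ⟪b, y⟫ = h x₀ y := by
        intro y; simp [hb, inner_sub_left, hadj, hh]
      set S : Submodule ℝ V := Submodule.span ℝ ({a, b} : Set V) with hS
      have haS : a ∈ S := Submodule.subset_span (by simp)
      have hbS : b ∈ S := Submodule.subset_span (by simp)
      -- H v := F v - Fadj v lies in S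
      have hHS : ∀ v : V, F v - Fadj v ∈ S := by
        intro v
        have key : (g x₀ x₀) • (F v - Fadj v) = (g v x₀) • b + (h v x₀) • a := by
          apply ext_inner_right ℝ
          intro y
          simp only [inner_smul_left, inner_sub_left, inner_add_left,
            RCLike.star_def, starRingEnd_apply, star_trivial]
          rw [hadj, hbh, hag]
          have hgy : (⟪F v, y⟫ - ⟪v, F y⟫ : ℝ) = h v y := rfl
          rw [hgy]
          exact E1 v x₀ y
        have : F v - Fadj v = (g x₀ x₀)⁻¹ • ((g v x₀) • b + (h v x₀) • a) := by
          rw [← key, smul_smul, inv_mul_cancel₀ hc, one_smul]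
        rw [this]
        exact Submodule.smul_mem _ _ (Submodule.add_mem _
          (Submodule.smul_mem _ _ hbS) (Submodule.smul_mem _ _ haS))
      -- G w := F w + Fadj w lies in S
      have hGS : ∀ w : V, F w + Fadj w ∈ S := by
        intro w
        have key : (h x₀ x₁) • (F w + Fadj w)
            = (h w x₁) • a + (g w x₁) • b - (g x₀ x₁) • (F w - Fadj w) := by
          apply ext_inner_right ℝ
          intro y
          simp only [inner_smul_left, inner_sub_left, inner_add_left,
            RCLike.star_def, starRingEnd_apply, star_trivial]
          rw [hadj, hag, hbh]
          have hgw : (⟪F w, y⟫ + ⟪w, F y⟫ : ℝ) = g w y := rfl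
          have hhw : (⟪F w, y⟫ - ⟪w, F y⟫ : ℝ) = h w y := rfl
          rw [hgw, hhw]
          linear_combination E x₀ w x₁ y
        have : F w + Fadj w = (h x₀ x₁)⁻¹ •
            ((h w x₁) • a + (g w x₁) • b - (g x₀ x₁) • (F w - Fadj w)) := by
          rw [← key, smul_smul, inv_mul_cancel₀ hd, one_smul]
        rw [this]
        exact Submodule.smul_mem _ _ (Submodule.sub_mem _
          (Submodule.add_mem _ (Submodule.smul_mem _ _ haS) (Submodule.smul_mem _ _ hbS))
          (Submodule.smul_mem _ _ (hHS w)))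
      have hFS : ∀ v : V, F v ∈ S := by
        intro v
        have : F v = (2 : ℝ)⁻¹ • ((F v + Fadj v) + (F v - Fadj v)) := by
          module
        rw [this]
        exact Submodule.smul_mem _ _ (Submodule.add_mem _ (hGS v) (hHS v))
      have htop : (⊤ : Submodule ℝ V) ≤ S := by
        intro u _
        have : F (F.symm u) ∈ S := hFS (F.symm u)
        simpa using this
      have hfin : Module.finrank ℝ V ≤ 2 := by
        have h1 : Module.finrank ℝ V = Module.finrank ℝ S := by
          rw [← finrank_top ℝ V]
          exact le_antisymm (Submodule.finrank_mono htop) (Submodule.finrank_mono le_top)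
        rw [h1, hS]
        refine (finrank_span_le_card _).trans ?_
        simp only [Set.toFinset_insert, Set.toFinset_singleton]
        exact (Finset.card_insert_le _ _).trans (by simp)
      omega
end

section
/- Let H be a real n×n matrix with n ≥ 3 satisfying H_{ip}H_{jq} − H_{iq}H_{jp} = δ_{ip}δ_{jq} − δ_{jp}δ_{iq} for all indices i,j,p,q. Then H = I_n or H = −I_n. -/
/-- If `H` is a real `n × n` matrix with `n ≥ 3` satisfying
`H_{ip}H_{jq} − H_{iq}H_{jp} = δ_{ip}δ_{jq} − δ_{jp}δ_{iq}` for all indices, then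
`H = Iₙ` or `H = −Iₙ`. -/
theorem matrix_two_by_two_minor_identity
    {n : ℕ} (hn : 3 ≤ n) (H : Matrix (Fin n) (Fin n) ℝ)
    (hH : ∀ i j p q : Fin n,
      H i p * H j q - H i q * H j p
        = (if i = p then (1:ℝ) else 0) * (if j = q then (1:ℝ) else 0)
          - (if j = p then (1:ℝ) else 0) * (if i = q then (1:ℝ) else 0)) :
    H = 1 ∨ H = -1 := by
  -- off-diagonal entries vanish
  have hoff : ∀ i p : Fin n, i ≠ p → H i p = 0 := by
    intro i p hip
    have hcard : ({i, p} : Finset (Fin n)).card < Fintype.card (Fin n) := by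
      have h2 : ({i, p} : Finset (Fin n)).card ≤ 2 := by
        apply le_trans (Finset.card_insert_le _ _)
        simp
      simp only [Fintype.card_fin]
      omega
    have hss : ({i, p} : Finset (Fin n)) ⊂ Finset.univ := by
      refine Finset.ssubset_univ_iff.mpr ?_
      intro h
      rw [h, Finset.card_univ] at hcard
      exact lt_irrefl _ hcard
    obtain ⟨j, -, hj⟩ := Finset.exists_of_ssubset hss
    simp only [Finset.mem_insert, Finset.mem_singleton, not_or] at hj
    obtain ⟨hji, hjp⟩ := hj
    have hkj := hH j i j p
    have hki := hH j i i p
    have h1 := hH i j i j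
    simp only [if_pos rfl, if_neg hip, if_neg hji, if_neg hjp,
      if_neg (Ne.symm hji), if_neg (fun h : i = j => hji h.symm), if_true] at hkj hki h1
    -- hkj : H j j * H i p - H j p * H i j = 0
    -- hki : H j i * H i p - H j p * H i i = 0
    -- h1 : H i i * H j j - H i j * H j i = 1
    linear_combination (-(H i p)) * h1 + H i i * hkj - H i j * hki
  have hdiag : ∀ i j : Fin n, i ≠ j → H i i * H j j = 1 := by
    intro i j hij
    have h1 := hH i j i j
    rw [hoff i j hij, hoff j i (Ne.symm hij)] at h1
    simp only [if_pos rfl, if_neg hij, if_neg (Ne.symm hij), if_true] at h1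
    linarith
  set i0 : Fin n := ⟨0, by omega⟩
  set i1 : Fin n := ⟨1, by omega⟩
  set i2 : Fin n := ⟨2, by omega⟩
  have h01 : i0 ≠ i1 := by simp [i0, i1, Fin.ext_iff]
  have h02 : i0 ≠ i2 := by simp [i0, i2, Fin.ext_iff]
  have h12 : i1 ≠ i2 := by simp [i1, i2, Fin.ext_iff]
  have e01 := hdiag i0 i1 h01
  have e02 := hdiag i0 i2 h02
  have e12 := hdiag i1 i2 h12
  have hsq : H i0 i0 * H i0 i0 = 1 := by nlinarith [e01, e02, e12]
  have hall : ∀ i : Fin n, H i i = H i0 i0 := by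
    intro i
    by_cases h : i = i0
    · rw [h]
    · have e := hdiag i i0 h
      linear_combination H i0 i0 * e - H i i * hsq
  rcases mul_self_eq_one_iff.mp hsq with h | h
  · left
    ext i j
    by_cases hij : i = j
    · subst hij
      rw [hall i, h, Matrix.one_apply_eq]
    · rw [hoff i j hij, Matrix.one_apply_ne hij]
  · right
    ext i j
    by_cases hij : i = j
    · subst hij
      rw [hall i, h]
      simp [Matrix.one_apply]
    · rw [hoff i j hij]
      simp [Matrix.one_apply, hij]
end

section
/- Let V be a real inner product space, J: V → V a skew-adjoint complex structure (J² = −id), K: V → V a skew-adjoint linear map, and suppose V has an orthonormal basis of the form e₁, Je₁, …, e_m, Je_m. If K maps the plane span{Z, JZ} into itself for every nonzero Z ∈ V, then K = a·J for some a ∈ ℝ. -/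
open scoped RealInnerProductSpace

/-- Let `V` be a real inner product space with a skew-adjoint complex
structure `J` (`J² = −id`) and an orthonormal basis of the form `e₁, Je₁, …, e_m, Je_m`
with `m ≥ 2`.  If a skew-adjoint linear map `K` maps the plane `span{Z, JZ}` into itself
for every nonzero `Z`, then `K = a·J` for some real number `a`. -/
theorem skew_adjoint_preserving_J_planes_is_multiple_of_J
    {V : Type*} [NormedAddCommGroup V] [InnerProductSpace ℝ V]
    (J K : V →ₗ[ℝ] V)
    (hJ2 : ∀ v : V, J (J v) = -v)
    (hJskew : ∀ x y : V, ⟪J x, y⟫ = -⟪x, J y⟫)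
    (hKskew : ∀ x y : V, ⟪K x, y⟫ = -⟪x, K y⟫)
    (m : ℕ) (hm : 2 ≤ m) (e : Fin m → V)
    (horth : Orthonormal ℝ (fun p : Fin m × Bool => if p.2 then J (e p.1) else e p.1))
    (hspan : Submodule.span ℝ
      (Set.range fun p : Fin m × Bool => if p.2 then J (e p.1) else e p.1) = ⊤)
    (hplanes : ∀ Z : V, Z ≠ 0 →
      ∀ W ∈ Submodule.span ℝ ({Z, J Z} : Set V),
        K W ∈ Submodule.span ℝ ({Z, J Z} : Set V)) :
    ∃ a : ℝ, ∀ v : V, K v = a • J v := by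
  classical
  have hinner := orthonormal_iff_ite.mp horth
  have hee : ∀ i j, ⟪e i, e j⟫ = if i = j then (1:ℝ) else 0 := by
    intro i j
    have := hinner (i, false) (j, false)
    simpa [Prod.ext_iff] using this
  have hJJ : ∀ i j, ⟪J (e i), J (e j)⟫ = if i = j then (1:ℝ) else 0 := by
    intro i j
    have := hinner (i, true) (j, true)
    simpa [Prod.ext_iff] using this
  have heJ : ∀ i j, ⟪e i, J (e j)⟫ = 0 := by
    intro i j
    have := hinner (i, false) (j, true)
    simpa [Prod.ext_iff] using this
  have hJe : ∀ i j, ⟪J (e i), e j⟫ = 0 := by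
    intro i j
    have := hinner (i, true) (j, false)
    simpa [Prod.ext_iff] using this
  have hene : ∀ i, e i ≠ 0 := by
    intro i h
    have := hee i i
    simp [h] at this
  have hJene : ∀ i, J (e i) ≠ 0 := by
    intro i h
    have := hJJ i i
    simp [h] at this
  -- key lemma: K Z is a multiple of J Z for every nonzero Z
  have key : ∀ Z : V, Z ≠ 0 → ∃ d : ℝ, K Z = d • J Z := by
    intro Z hZ
    have hmem : K Z ∈ Submodule.span ℝ ({Z, J Z} : Set V) :=
      hplanes Z hZ Z (Submodule.subset_span (by simp))
    rcases Submodule.mem_span_pair.mp hmem with ⟨c, d, hcd⟩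
    have hKZ : ⟪K Z, Z⟫ = 0 := by
      have h1 := hKskew Z Z
      have h2 : ⟪K Z, Z⟫ = ⟪Z, K Z⟫ := real_inner_comm _ _
      linarith
    have hJZ : ⟪J Z, Z⟫ = 0 := by
      have h1 := hJskew Z Z
      have h2 : ⟪J Z, Z⟫ = ⟪Z, J Z⟫ := real_inner_comm _ _
      linarith
    rw [← hcd] at hKZ
    rw [inner_add_left, real_inner_smul_left, real_inner_smul_left, hJZ] at hKZ
    have hc : c = 0 := by
      have hZZ : ⟪Z, Z⟫ ≠ 0 := fun h => hZ (inner_self_eq_zero.mp h)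
      have : c * ⟪Z, Z⟫ = 0 := by linarith
      exact (mul_eq_zero.mp this).resolve_right hZZ
    exact ⟨d, by rw [← hcd, hc, zero_smul, zero_add]⟩
  -- coefficients on basis vectors
  choose a ha using fun i => key (e i) (hene i)
  -- K (J e i) = a i • J (J e i)
  have haJ : ∀ i, K (J (e i)) = a i • J (J (e i)) := by
    intro i
    obtain ⟨d, hd⟩ := key (J (e i)) (hJene i)
    have h1 : ⟪K (J (e i)), e i⟫ = -(a i) := by
      rw [hKskew, ha i, real_inner_smul_right, hJJ i i]
      simp
    have h2 : ⟪K (J (e i)), e i⟫ = -d := by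
      rw [hd, real_inner_smul_left, hJ2, inner_neg_left, hee i i]
      simp
    have : d = a i := by rw [h1] at h2; linarith
    rw [hd, this]
  -- all coefficients are equal
  have haeq : ∀ i j, a i = a j := by
    intro i j
    by_cases hij : i = j
    · rw [hij]
    · set Z := e i + e j with hZ
      have hZne : Z ≠ 0 := by
        intro h
        have : ⟪Z, e i⟫ = 0 := by rw [h]; simp
        rw [hZ, inner_add_left, hee i i, hee j i] at this
        simp [Ne.symm hij] at this
      obtain ⟨d, hd⟩ := key Z hZne
      have hKZ : K Z = a i • J (e i) + a j • J (e j) := by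
        rw [hZ, map_add, ha i, ha j]
      have hJZ : J Z = J (e i) + J (e j) := by rw [hZ, map_add]
      have h1 : ⟪K Z, J (e i)⟫ = a i := by
        rw [hKZ, inner_add_left, real_inner_smul_left, real_inner_smul_left,
          hJJ i i, hJJ j i]
        simp [Ne.symm hij]
      have h2 : ⟪K Z, J (e i)⟫ = d := by
        rw [hd, real_inner_smul_left, hJZ, inner_add_left, hJJ i i, hJJ j i]
        simp [Ne.symm hij]
      have h3 : ⟪K Z, J (e j)⟫ = a j := by
        rw [hKZ, inner_add_left, real_inner_smul_left, real_inner_smul_left,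
          hJJ i j, hJJ j j]
        simp [hij]
      have h4 : ⟪K Z, J (e j)⟫ = d := by
        rw [hd, real_inner_smul_left, hJZ, inner_add_left, hJJ i j, hJJ j j]
        simp [hij]
      rw [h1] at h2; rw [h3] at h4; rw [h2, h4]
  have h2m : (0:ℕ) < m := by omega
  set a0 := a ⟨0, h2m⟩ with ha0
  refine ⟨a0, ?_⟩
  have : K = a0 • J := by
    apply LinearMap.ext_on_range hspan
    intro p
    rcases p with ⟨i, b⟩
    cases b
    · simpa [haeq i ⟨0, h2m⟩] using ha i
    · simpa [haeq i ⟨0, h2m⟩] using haJ i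
  intro v
  rw [this]
  simp
end
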